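/- For the n-dimensional box B[a,b] = Πᵢ [aᵢ,bᵢ] with 0 < aᵢ ≤ bᵢ, one has Ω(β|B[a,b]) = ‖β‖₁ + Σᵢ [ (1/(2aᵢ))(aᵢ − |βᵢ|)₊² + (1/(2bᵢ))(|βᵢ| − bᵢ)₊² ] for every β ∈ ℝⁿ. -/

import Mathlib

/-!
Writing `(β²/l + l)/2 = |β| + (|β| - l)²/(2l)`, minimizing over `l ∈ [a, b]` amounts to minimizing
`(|β| - l)²/(2l)`, a function of `l > 0` that decreases up to `|β|` and increases afterwards. Its
minimum over `[a, b]` is therefore attained at the clamp `max a (min |β| b)` of `|β|` to `[a, b]`,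
where it equals the two one-sided penalty terms. The box problem separates coordinatewise.
-/

open Finset Set

theorem isLeast_sum_of_isLeast {ι α M : Type*} [Fintype ι] [AddCommMonoid M] [PartialOrder M]
    [IsOrderedAddMonoid M] {s : ι → Set α} {f : ι → α → M} {v : ι → M}
    (h : ∀ i, IsLeast (f i '' s i) (v i)) :
    IsLeast {t | ∃ l : ι → α, (∀ i, l i ∈ s i) ∧ t = ∑ i, f i (l i)} (∑ i, v i) := by
  choose l hl hlv using fun i => (h i).1
  refine ⟨⟨l, hl, by simp only [hlv]⟩, ?_⟩
  rintro t ⟨m, hm, rfl⟩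
  exact sum_le_sum fun i _ => (h i).2 ⟨m i, hm i, rfl⟩

theorem half_sq_div_add_self (β : ℝ) {l : ℝ} (hl : l ≠ 0) :
    (1 / 2) * (β ^ 2 / l + l) = |β| + (|β| - l) ^ 2 / (2 * l) := by
  rw [← sq_abs β]
  field_simp
  ring

theorem sub_sq_div_two_mul_sub_sub_sq_div_two_mul (c : ℝ) {x y : ℝ} (hx : x ≠ 0) (hy : y ≠ 0) :
    (c - x) ^ 2 / (2 * x) - (c - y) ^ 2 / (2 * y) = (x - y) * (x * y - c ^ 2) / (2 * x * y) := by
  field_simp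
  ring

theorem penalty_eq_sub_sq_div_clamp {a b : ℝ} (hab : a ≤ b) (c : ℝ) :
    (1 / (2 * a)) * (max (a - c) 0) ^ 2 + (1 / (2 * b)) * (max (c - b) 0) ^ 2 =
      (c - max a (min c b)) ^ 2 / (2 * max a (min c b)) := by
  rcases le_total c a with hca | hac
  · rw [max_eq_left (by linarith), max_eq_right (by linarith), min_eq_left (by linarith),
      max_eq_left hca]
    ring
  rcases le_total b c with hbc | hcb
  · rw [max_eq_right (by linarith), max_eq_left (by linarith), min_eq_right hbc,
      max_eq_right hab]
    ring
  · rw [max_eq_right (by linarith), max_eq_right (by linarith), min_eq_left hcb,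
      max_eq_right hac]
    simp

theorem sub_sq_div_clamp_le {a b c l : ℝ} (ha : 0 < a) (hc : 0 ≤ c) (hal : a ≤ l) (hlb : l ≤ b) :
    (c - max a (min c b)) ^ 2 / (2 * max a (min c b)) ≤ (c - l) ^ 2 / (2 * l) := by
  have hl : 0 < l := ha.trans_le hal
  rw [← sub_nonpos]
  rcases le_total c a with hca | hac
  · rw [min_eq_left (hca.trans (hal.trans hlb)), max_eq_left hca,
      sub_sq_div_two_mul_sub_sub_sq_div_two_mul c ha.ne' hl.ne']
    refine div_nonpos_of_nonpos_of_nonneg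
      (mul_nonpos_of_nonpos_of_nonneg (by linarith) ?_) (by positivity)
    nlinarith
  rcases le_total b c with hbc | hcb
  · have hb : 0 < b := hl.trans_le hlb
    rw [min_eq_right hbc, max_eq_right (hal.trans hlb),
      sub_sq_div_two_mul_sub_sub_sq_div_two_mul c hb.ne' hl.ne']
    refine div_nonpos_of_nonpos_of_nonneg
      (mul_nonpos_of_nonneg_of_nonpos (by linarith) ?_) (by positivity)
    nlinarith
  · rw [min_eq_left hcb, max_eq_right hac, sub_self, sq, mul_zero, zero_div, zero_sub,
      neg_nonpos]
    exact div_nonneg (sq_nonneg _) (by linarith)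

theorem isLeast_half_sq_div_add_image_Icc {a b : ℝ} (ha : 0 < a) (hab : a ≤ b) (β : ℝ) :
    IsLeast ((fun l => (1 / 2) * (β ^ 2 / l + l)) '' Icc a b)
      (|β| + ((1 / (2 * a)) * (max (a - |β|) 0) ^ 2 + (1 / (2 * b)) * (max (|β| - b) 0) ^ 2)) := by
  have hm : max a (min |β| b) ∈ Icc a b := ⟨le_max_left _ _, max_le hab (min_le_right _ _)⟩
  rw [penalty_eq_sub_sq_div_clamp hab]
  refine ⟨⟨_, hm, half_sq_div_add_self β (ha.trans_le hm.1).ne'⟩, ?_⟩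
  rintro _ ⟨l, hl, rfl⟩
  dsimp only
  rw [half_sq_div_add_self β (ha.trans_le hl.1).ne']
  exact add_le_add le_rfl (sub_sq_div_clamp_le ha (abs_nonneg β) hl.1 hl.2)

theorem stmt_10 (n : ℕ) (a b : Fin n → ℝ) (ha : ∀ i, 0 < a i) (hab : ∀ i, a i ≤ b i)
    (β : Fin n → ℝ) :
    sInf {t : ℝ | ∃ l : Fin n → ℝ, (∀ i, l i ∈ Set.Icc (a i) (b i)) ∧
        t = (1/2) * ∑ i, (β i ^ 2 / l i + l i)} =
      (∑ i, |β i|) + ∑ i, ((1 / (2 * a i)) * (max (a i - |β i|) 0) ^ 2 +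
        (1 / (2 * b i)) * (max (|β i| - b i) 0) ^ 2) := by
  simp_rw [mul_sum, ← sum_add_distrib]
  exact (isLeast_sum_of_isLeast fun i =>
    isLeast_half_sq_div_add_image_Icc (ha i) (hab i) (β i)).csInf_eq
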